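/- arXiv:1511.08443 — 4 statements merged into one kernel-verified Lean document; each statement's English description precedes it below -/
import Mathlib

section
/- Let Φ be a multi-Hilbertian space and let X be a Φ'_β-valued random variable which is regular, i.e., there exists a weaker countably Hilbertian topology θ on Φ with P(ω : X(ω) ∈ Φ'_θ) = 1. Then the map X : Φ → L⁰(Ω,F,P), φ ↦ X[φ], is continuous. -/
open MeasureTheory Topology Filter Set
open scoped ENNReal NNReal

noncomputable section

namespace Paper

universe u

variable {Φ : Type*} [AddCommGroup Φ] [Module ℝ Φ]

/-- A seminorm `p` is *Hilbertian* if `p(φ)² = Q(φ,φ)` for a symmetric non-negative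
bilinear form `Q` on `Φ × Φ`. -/
def IsHilbertian (p : Seminorm ℝ Φ) : Prop :=
  ∃ Q : Φ →ₗ[ℝ] Φ →ₗ[ℝ] ℝ, (∀ x y, Q x y = Q y x) ∧ (∀ x, 0 ≤ Q x x) ∧ ∀ x, (p x) ^ 2 = Q x x

/-- The Hilbert space `Φ_p` (the completion of `Φ/ker p`) is separable; intrinsically:
there is a countable `p`-dense subset of `Φ`. -/
def HasSeparableQuotient (p : Seminorm ℝ Φ) : Prop :=
  ∃ D : Set Φ, D.Countable ∧ ∀ x : Φ, ∀ ε : ℝ, 0 < ε → ∃ y ∈ D, p (x - y) < ε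

/-- The polarization form associated to a Hilbertian seminorm `q`. -/
def polarForm (q : Seminorm ℝ Φ) (x y : Φ) : ℝ :=
  ((q (x + y)) ^ 2 - (q x) ^ 2 - (q y) ^ 2) / 2

/-- For Hilbertian seminorms `p ≤ q`, the canonical inclusion `i_{p,q} : Φ_q → Φ_p` is
Hilbert–Schmidt; intrinsically: the sums `∑ p(φᵢ)²` over finite `q`-orthonormal families
are uniformly bounded. -/
def IsHilbertSchmidtPair (p q : Seminorm ℝ Φ) : Prop :=
  ∃ C : ℝ, ∀ (m : ℕ) (φ : Fin m → Φ),
    (∀ i j, polarForm q (φ i) (φ j) = if i = j then 1 else 0) →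
    ∑ i, (p (φ i)) ^ 2 ≤ C

/-- A linear functional on `Φ` belongs to the Hilbert space `Φ'_q` (the dual of `Φ_q`)
iff it is `q`-bounded. -/
def MemDualOf (q : Seminorm ℝ Φ) (f : Φ →ₗ[ℝ] ℝ) : Prop :=
  ∃ C : ℝ, ∀ φ, |f φ| ≤ C * q φ

/-- The dual norm `q'` on `Φ'_q`. -/
def dualNorm (q : Seminorm ℝ Φ) (f : Φ →ₗ[ℝ] ℝ) : ℝ :=
  sSup ((fun φ => |f φ|) '' {φ | q φ ≤ 1})

section TopologySection

variable [TopologicalSpace Φ]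

/-- `Φ` is a nuclear space: its topology is generated by a family of Hilbertian seminorms
such that each member is dominated by another one with Hilbert–Schmidt inclusion. -/
def IsNuclearSpace (Φ : Type*) [AddCommGroup Φ] [Module ℝ Φ] [TopologicalSpace Φ] : Prop :=
  ∃ (ι : Type) (hι : Nonempty ι) (fam : SeminormFamily ℝ Φ ι),
    (haveI := hι; WithSeminorms fam) ∧
    (∀ i, IsHilbertian (fam i)) ∧
    ∀ i, ∃ j, fam i ≤ fam j ∧ IsHilbertSchmidtPair (fam i) (fam j)

/-- `Φ` is multi-Hilbertian: its topology is generated by a family of Hilbertian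
seminorms, each with separable associated Hilbert space. -/
def IsMultiHilbertian (Φ : Type*) [AddCommGroup Φ] [Module ℝ Φ] [TopologicalSpace Φ] : Prop :=
  ∃ (ι : Type) (hι : Nonempty ι) (fam : SeminormFamily ℝ Φ ι),
    (haveI := hι; WithSeminorms fam) ∧
    ∀ i, IsHilbertian (fam i) ∧ HasSeparableQuotient (fam i)

/-- A weaker countably Hilbertian topology `θ` on `Φ`: an increasing sequence of
continuous Hilbertian seminorms with separable associated Hilbert spaces. -/
structure WCHT (Φ : Type*) [AddCommGroup Φ] [Module ℝ Φ] [TopologicalSpace Φ] where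
  p : ℕ → Seminorm ℝ Φ
  mono : Monotone p
  hilb : ∀ n, IsHilbertian (p n)
  sep : ∀ n, HasSeparableQuotient (p n)
  cont : ∀ n, Continuous ⇑(p n)

/-- `f ∈ Φ'_θ = ⋃ₙ Φ'_{pₙ}`: `f` is continuous for the countably Hilbertian topology `θ`. -/
def WCHT.MemDual (θ : WCHT Φ) (f : Φ → ℝ) : Prop :=
  ∃ (n : ℕ) (C : ℝ), ∀ φ, |f φ| ≤ C * θ.p n φ

end TopologySection

/-- Borel measurability of a map into a topological space. -/
def BorelMeasurable {Ω : Type*} [MeasurableSpace Ω] {α : Type*} [TopologicalSpace α]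
    (X : Ω → α) : Prop :=
  letI := borel α
  Measurable X

/-- The distribution `μ_X` of `X`, as a Borel measure. -/
def distributionOf {Ω : Type*} [MeasurableSpace Ω] {α : Type*} [TopologicalSpace α]
    (P : Measure Ω) (X : Ω → α) : @Measure α (borel α) :=
  letI := borel α
  P.map X

/-- A Borel measure `μ` is *Radon* if for every Borel set `A` and `ε > 0` there is a
compact `K ⊆ A` with `μ (A \ K) < ε`. -/
def IsRadon {α : Type*} [TopologicalSpace α] {mα : MeasurableSpace α}
    (μ : @Measure α mα) : Prop :=
  ∀ A : Set α, MeasurableSet[mα] A → ∀ ε : ℝ≥0∞, 0 < ε →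
    ∃ K, K ⊆ A ∧ IsCompact K ∧ μ (A \ K) < ε

section ProbSection

variable {Ω : Type*} [MeasurableSpace Ω] [TopologicalSpace Φ]

/-- Continuity of `φ ↦ X(φ)` from `Φ` into `L⁰(Ω,F,P)` (convergence in probability). -/
def ContinuousInProb (P : Measure Ω) (X : Φ → Ω → ℝ) : Prop :=
  ∀ φ₀ : Φ, ∀ ε : ℝ, 0 < ε → ∃ U ∈ 𝓝 φ₀, ∀ φ ∈ U,
    P {ω | ε ≤ |X φ ω - X φ₀ ω|} < ENNReal.ofReal ε

/-- Equicontinuity of the family `{X_t : t ∈ s}` of (linear) maps `Φ → L⁰(Ω,F,P)`. -/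
def EquicontinuousInProb (P : Measure Ω) (X : ℝ → Φ → Ω → ℝ) (s : Set ℝ) : Prop :=
  ∀ ε : ℝ, 0 < ε → ∃ U ∈ 𝓝 (0 : Φ), ∀ t ∈ s, ∀ φ ∈ U,
    P {ω | ε ≤ |X t φ ω|} < ENNReal.ofReal ε

/-- `p`-continuity of a (linear) map `Φ → L⁰(Ω,F,P)`. -/
def SeminormContinuousInProb (P : Measure Ω) (p : Seminorm ℝ Φ) (X : Φ → Ω → ℝ) : Prop :=
  ∀ ε : ℝ, 0 < ε → ∃ δ : ℝ, 0 < δ ∧ ∀ φ : Φ, p φ < δ →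
    P {ω | ε ≤ |X φ ω|} < ENNReal.ofReal ε

/-- A cylindrical process in `Φ'`: for each `t ∈ s`, a linear map `Φ → L⁰(Ω,F,P)`. -/
def IsCylindricalProcess (P : Measure Ω) (X : ℝ → Φ → Ω → ℝ) (s : Set ℝ) : Prop :=
  (∀ t ∈ s, ∀ φ : Φ, Measurable (X t φ)) ∧
  ∀ t ∈ s, ∀ (a b : ℝ) (φ ψ : Φ), ∀ᵐ ω ∂P,
    X t (a • φ + b • ψ) ω = a * X t φ ω + b * X t ψ ω

/-- A `Φ'_β`-valued random variable is *regular* if it is a.s. concentrated on the dual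
of a weaker countably Hilbertian topology. -/
def IsRegularRV (P : Measure Ω) (X : Ω → (Φ →L[ℝ] ℝ)) : Prop :=
  ∃ θ : WCHT Φ, ∀ᵐ ω ∂P, θ.MemDual ⇑(X ω)

end ProbSection

/-- Right-continuity with left limits (càdlàg) of a path on a set `s ⊆ ℝ`. -/
def CadlagOn {α : Type*} [TopologicalSpace α] (f : ℝ → α) (s : Set ℝ) : Prop :=
  (∀ t ∈ s, ContinuousWithinAt f (s ∩ Ici t) t) ∧
  ∀ t ∈ s, (𝓝[s ∩ Iio t] t).NeBot → ∃ l : α, Tendsto f (𝓝[s ∩ Iio t] t) (𝓝 l)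

/-- Path regularity: continuous (`cts = true`) or càdlàg (`cts = false`) paths on `s`. -/
def PathReg {α : Type*} [TopologicalSpace α] (cts : Bool) (f : ℝ → α) (s : Set ℝ) : Prop :=
  if cts then ContinuousOn f s else CadlagOn f s

/-- Path regularity of a `Φ'_q`-valued path, in the dual norm `q'`. -/
def PathRegDual (cts : Bool) (q : Seminorm ℝ Φ) (f : ℝ → (Φ →ₗ[ℝ] ℝ)) (s : Set ℝ) : Prop :=
  if cts then ∀ t ∈ s, Tendsto (fun u => dualNorm q (f u - f t)) (𝓝[s] t) (𝓝 0)
  else ((∀ t ∈ s, Tendsto (fun u => dualNorm q (f u - f t)) (𝓝[s ∩ Ici t] t) (𝓝 0)) ∧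
    ∀ t ∈ s, (𝓝[s ∩ Iio t] t).NeBot → ∃ l : Φ →ₗ[ℝ] ℝ, MemDualOf q l ∧
      Tendsto (fun u => dualNorm q (f u - l)) (𝓝[s ∩ Iio t] t) (𝓝 0))

/-- The real-valued process `Z` has a version with continuous (resp. càdlàg) paths on `s`. -/
def HasPathVersion {Ω : Type*} [MeasurableSpace Ω] (P : Measure Ω) (cts : Bool)
    (Z : ℝ → Ω → ℝ) (s : Set ℝ) : Prop :=
  ∃ W : ℝ → Ω → ℝ, (∀ t ∈ s, Measurable (W t)) ∧
    (∀ᵐ ω ∂P, PathReg cts (fun t => W t ω) s) ∧ ∀ t ∈ s, ∀ᵐ ω ∂P, W t ω = Z t ω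

/-! `Φ'_θ` is the increasing union of the closed sets `{f | |f| ≤ k · pₖ}`, so regularity and
continuity of `P` from below give, for each `ε`, an index `k` with `P(X ∉ {|f| ≤ k · pₖ}) < ε`; off
that event `|X[φ] - X[φ₀]| ≤ k · pₖ(φ - φ₀)`, and `pₖ` is continuous on `Φ`. -/

section Regularity

variable [TopologicalSpace Φ] {Ω : Type*} [MeasurableSpace Ω]

theorem isClosed_setOf_forall_abs_apply_le [IsTopologicalAddGroup Φ] [ContinuousSMul ℝ Φ]
    (g : Φ → ℝ) : IsClosed {f : Φ →L[ℝ] ℝ | ∀ φ, |f φ| ≤ g φ} := by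
  rw [ofPred_forall]
  exact isClosed_iInter fun φ => isClosed_le (continuous_eval_const φ).abs continuous_const

theorem BorelMeasurable.measurableSet_preimage {α : Type*} [TopologicalSpace α] {X : Ω → α}
    (hX : BorelMeasurable X) {s : Set α} (hs : IsClosed s) : MeasurableSet (X ⁻¹' s) :=
  letI := borel α
  haveI : BorelSpace α := ⟨rfl⟩
  hX hs.measurableSet

theorem exists_measure_compl_lt_of_ae_exists_mem {μ : Measure Ω} [IsFiniteMeasure μ]
    {A : ℕ → Set Ω} (hA : ∀ k, NullMeasurableSet (A k) μ) (hmono : Monotone A)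
    (hae : ∀ᵐ ω ∂μ, ∃ k, ω ∈ A k) {δ : ℝ≥0∞} (hδ : 0 < δ) : ∃ k, μ (A k)ᶜ < δ := by
  have hnull : μ (⋂ k, (A k)ᶜ) = 0 := by
    rw [← compl_iUnion]
    exact ae_iff.mp (hae.mono fun ω => mem_iUnion.mpr)
  have htendsto : Tendsto (fun k => μ (A k)ᶜ) atTop (𝓝 0) := hnull ▸
    tendsto_measure_iInter_atTop (fun k => (hA k).compl)
      (fun _ _ h => compl_subset_compl.mpr (hmono h)) ⟨0, measure_ne_top μ _⟩
  exact (htendsto.eventually (gt_mem_nhds hδ)).exists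

theorem continuousInProb_of_seminorm_bound [ContinuousSub Φ] {P : Measure Ω}
    {X : Ω → Φ →L[ℝ] ℝ}
    (h : ∀ ε > 0, ∃ (p : Seminorm ℝ Φ) (C : ℝ) (B : Set Ω), Continuous p ∧
      P Bᶜ < ENNReal.ofReal ε ∧ ∀ ω ∈ B, ∀ φ, |X ω φ| ≤ C * p φ) :
    ContinuousInProb P (fun φ ω => X ω φ) := by
  intro φ₀ ε hε
  obtain ⟨p, C, B, hp, hB, hbound⟩ := h ε hε
  have hnhds : {φ | C * p (φ - φ₀) < ε} ∈ 𝓝 φ₀ :=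
    (isOpen_lt (continuous_const.mul (hp.comp (continuous_sub_right φ₀))) continuous_const
      ).mem_nhds (by simpa using hε)
  refine ⟨_, hnhds, fun φ hφ => (measure_mono fun ω hω hωB => ?_).trans_lt hB⟩
  have hsmall : |X ω φ - X ω φ₀| < ε := by
    rw [← map_sub]
    exact (hbound ω hωB _).trans_lt hφ
  exact hω.not_gt hsmall

namespace WCHT

/-- Using `k` both as index and as constant makes these sets increasing, with union `Φ'_θ`. -/
def dualBall (θ : WCHT Φ) (k : ℕ) : Set (Φ →L[ℝ] ℝ) :=
  {f | ∀ φ, |f φ| ≤ k * θ.p k φ}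

theorem isClosed_dualBall [IsTopologicalAddGroup Φ] [ContinuousSMul ℝ Φ] (θ : WCHT Φ) (k : ℕ) :
    IsClosed (θ.dualBall k) :=
  isClosed_setOf_forall_abs_apply_le _

theorem monotone_dualBall (θ : WCHT Φ) : Monotone θ.dualBall := fun a b hab f hf φ =>
  (hf φ).trans <| mul_le_mul (by exact_mod_cast hab) (θ.mono hab φ) (apply_nonneg _ _)
    (Nat.cast_nonneg _)

theorem MemDual.exists_mem_dualBall {θ : WCHT Φ} {f : Φ →L[ℝ] ℝ} (hf : θ.MemDual f) :
    ∃ k, f ∈ θ.dualBall k := by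
  obtain ⟨n, C, hC⟩ := hf
  refine ⟨max n ⌈C⌉₊, fun φ => (hC φ).trans ?_⟩
  exact mul_le_mul ((Nat.le_ceil C).trans (by exact_mod_cast le_max_right _ _))
    (θ.mono (le_max_left _ _) φ) (apply_nonneg _ _) (Nat.cast_nonneg _)

end WCHT

end Regularity

theorem regular_implies_continuousInProb_general
    {Φ : Type*} [AddCommGroup Φ] [Module ℝ Φ] [TopologicalSpace Φ]
    [IsTopologicalAddGroup Φ] [ContinuousSMul ℝ Φ]
    {Ω : Type*} [MeasurableSpace Ω] (P : Measure Ω) [IsProbabilityMeasure P]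
    (X : Ω → (Φ →L[ℝ] ℝ))
    (hXmeas : BorelMeasurable X)
    (hreg : IsRegularRV P X) :
    ContinuousInProb P (fun φ ω => X ω φ) := by
  obtain ⟨θ, hθ⟩ := hreg
  refine continuousInProb_of_seminorm_bound fun ε hε => ?_
  obtain ⟨k, hk⟩ := exists_measure_compl_lt_of_ae_exists_mem
    (fun k => (hXmeas.measurableSet_preimage (θ.isClosed_dualBall k)).nullMeasurableSet)
    (fun _ _ h => preimage_mono (θ.monotone_dualBall h))
    (hθ.mono fun _ => WCHT.MemDual.exists_mem_dualBall) (ENNReal.ofReal_pos.mpr hε)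
  exact ⟨θ.p k, k, _, θ.cont k, hk, fun _ hω => hω⟩

/-- If `Φ` is multi-Hilbertian and `X` is a regular `Φ'_β`-valued random
variable, then the map `φ ↦ X[φ]` from `Φ` into `L⁰(Ω,F,P)` is continuous. -/
theorem regular_implies_continuousInProb
    {Φ : Type*} [AddCommGroup Φ] [Module ℝ Φ] [TopologicalSpace Φ]
    [IsTopologicalAddGroup Φ] [ContinuousSMul ℝ Φ]
    {Ω : Type*} [MeasurableSpace Ω] (P : Measure Ω) [IsProbabilityMeasure P] [P.IsComplete]
    (hΦ : IsMultiHilbertian Φ)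
    (X : Ω → (Φ →L[ℝ] ℝ))
    (hXmeas : BorelMeasurable X)
    (hreg : IsRegularRV P X) :
    ContinuousInProb P (fun φ ω => X ω φ) :=
  regular_implies_continuousInProb_general P X hXmeas hreg

end Paper
end
end

section
/- Let Φ be a multi-Hilbertian barrelled space and let X be a Φ'_β-valued random variable whose distribution μ_X is a Radon probability measure on Φ'_β. Then X is regular, i.e., there exists a weaker countably Hilbertian topology θ on Φ with P(ω : X(ω) ∈ Φ'_θ) = 1. -/
open MeasureTheory Topology Filter Set
open scoped ENNReal NNReal

noncomputable section

namespace Paper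

universe u

variable {Φ : Type*} [AddCommGroup Φ] [Module ℝ Φ]

/-!
Since `μ_X` is Radon, `X` lies almost surely in a countable union of compact sets
`Kₙ ⊆ Φ'_β`. As `Φ` is barrelled, each `Kₙ` is equicontinuous, i.e. bounded by `Cₙ` times a
finite supremum of the generating seminorms. The continuous Hilbertian seminorms with separable
`Φ_p` form a directed set, since `√(p² + q²)` dominates `p` and `q`; so that finite supremum is
dominated by such a seminorm `qₙ`, and the `qₙ` are in turn dominated by an increasing sequence
`rₙ` of them. The `rₙ` define `θ`, and `X(ω) ∈ Φ'_θ` whenever `X(ω) ∈ ⋃ₙ Kₙ`.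
-/

-- Minkowski's inequality in `ℝ²`, read off the triangle inequality in `ℂ`.
lemma sqrt_add_sq_add_sq_le (a b c d : ℝ) :
    √((a + c) ^ 2 + (b + d) ^ 2) ≤ √(a ^ 2 + b ^ 2) + √(c ^ 2 + d ^ 2) := by
  simpa [Complex.norm_eq_sqrt_sq_add_sq] using norm_add_le (⟨a, b⟩ : ℂ) ⟨c, d⟩

section L2Sum

variable {E : Type*} [AddCommGroup E] [Module ℝ E]

def l2Sum (p q : Seminorm ℝ E) : Seminorm ℝ E :=
  Seminorm.of (fun x => √(p x ^ 2 + q x ^ 2))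
    (fun x y => calc
      √(p (x + y) ^ 2 + q (x + y) ^ 2) ≤ √((p x + p y) ^ 2 + (q x + q y) ^ 2) := by
        gcongr <;> first | exact apply_nonneg _ _ | exact map_add_le_add _ _ _
      _ ≤ _ := sqrt_add_sq_add_sq_le _ _ _ _)
    (fun a x => by
      simp only [map_smul_eq_mul, mul_pow, ← mul_add, Real.sqrt_mul (sq_nonneg _),
        Real.sqrt_sq_eq_abs, Real.norm_eq_abs, abs_abs])

variable {p q : Seminorm ℝ E}

lemma l2Sum_apply (x : E) : l2Sum p q x = √(p x ^ 2 + q x ^ 2) := rfl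

lemma le_l2Sum_left : p ≤ l2Sum p q := fun _ =>
  Real.le_sqrt_of_sq_le (le_add_of_nonneg_right (sq_nonneg _))

lemma le_l2Sum_right : q ≤ l2Sum p q := fun _ =>
  Real.le_sqrt_of_sq_le (le_add_of_nonneg_left (sq_nonneg _))

lemma l2Sum_le_add : l2Sum p q ≤ p + q := fun x => by
  simpa [l2Sum_apply] using sqrt_add_sq_add_sq_le (p x) 0 0 (q x)

lemma IsHilbertian.l2Sum (hp : IsHilbertian p) (hq : IsHilbertian q) :
    IsHilbertian (l2Sum p q) := by
  obtain ⟨Qp, hQp_symm, hQp_nonneg, hpQ⟩ := hp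
  obtain ⟨Qq, hQq_symm, hQq_nonneg, hqQ⟩ := hq
  refine ⟨Qp + Qq, fun x y => by simp [hQp_symm x y, hQq_symm x y],
    fun x => add_nonneg (hQp_nonneg x) (hQq_nonneg x), fun x => ?_⟩
  rw [l2Sum_apply, Real.sq_sqrt (by positivity), hpQ, hqQ]
  rfl

lemma HasSeparableQuotient.mono (hq : HasSeparableQuotient q) (hpq : p ≤ q) :
    HasSeparableQuotient p := by
  obtain ⟨D, hD, hdense⟩ := hq
  refine ⟨D, hD, fun x ε hε => ?_⟩
  obtain ⟨y, hy, hxy⟩ := hdense x ε hε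
  exact ⟨y, hy, (hpq _).trans_lt hxy⟩

lemma HasSeparableQuotient.add (hp : HasSeparableQuotient p) (hq : HasSeparableQuotient q) :
    HasSeparableQuotient (p + q) := by
  obtain ⟨Dp, hDp, hDp_dense⟩ := hp
  obtain ⟨Dq, hDq, hDq_dense⟩ := hq
  let T : E × E × ℕ → Set E := fun t =>
    {z | p (z - t.1) < 1 / (t.2.2 + 1) ∧ q (z - t.2.1) < 1 / (t.2.2 + 1)}
  let g : E × E × ℕ → E := fun t => Classical.epsilon (· ∈ T t)
  refine ⟨g '' (Dp ×ˢ Dq ×ˢ univ), (hDp.prod (hDq.prod countable_univ)).image g,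
    fun x ε hε => ?_⟩
  obtain ⟨n, hn⟩ := exists_nat_one_div_lt (by positivity : 0 < ε / 4)
  obtain ⟨a, ha, hxa⟩ := hDp_dense x (1 / (n + 1)) (by positivity)
  obtain ⟨b, hb, hxb⟩ := hDq_dense x (1 / (n + 1)) (by positivity)
  -- `x` witnesses that `T (a, b, n)` is nonempty, so its chosen point is close to `x`.
  obtain ⟨hya, hyb⟩ : g (a, b, n) ∈ T (a, b, n) := Classical.epsilon_spec ⟨x, hxa, hxb⟩
  refine ⟨g (a, b, n), mem_image_of_mem _ ⟨ha, hb, mem_univ _⟩, ?_⟩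
  have hpx := map_sub_le_add p (x - a) (g (a, b, n) - a)
  have hqx := map_sub_le_add q (x - b) (g (a, b, n) - b)
  rw [sub_sub_sub_cancel_right] at hpx hqx
  rw [add_apply]
  linarith

lemma HasSeparableQuotient.l2Sum (hp : HasSeparableQuotient p) (hq : HasSeparableQuotient q) :
    HasSeparableQuotient (l2Sum p q) :=
  (hp.add hq).mono l2Sum_le_add

lemma continuous_l2Sum [TopologicalSpace E] (hp : Continuous p) (hq : Continuous q) :
    Continuous (l2Sum p q) :=
  ((hp.pow 2).add (hq.pow 2)).sqrt

end L2Sum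

lemma DirectedOn.exists_monotone_ge {α : Type*} [Preorder α] {S : Set α}
    (hS : DirectedOn (· ≤ ·) S) {q : ℕ → α} (hq : ∀ n, q n ∈ S) :
    ∃ r : ℕ → α, Monotone r ∧ (∀ n, r n ∈ S) ∧ ∀ n, q n ≤ r n := by
  choose! u hu hle_left hle_right using hS
  let r : ℕ → α := fun n => Nat.rec (q 0) (fun n r => u r (q (n + 1))) n
  have hr : ∀ n, r n ∈ S := fun n => by
    induction n with
    | zero => exact hq 0
    | succ n ih => exact hu _ ih _ (hq _)
  refine ⟨r, monotone_nat_of_le_succ fun n => hle_left _ (hr n) _ (hq _), hr, ?_⟩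
  rintro (_ | n)
  · exact le_rfl
  · exact hle_right _ (hr n) _ (hq _)

section ContinuousHilbertian

variable (E : Type*) [AddCommGroup E] [Module ℝ E] [TopologicalSpace E]

def continuousHilbertianSeminorms : Set (Seminorm ℝ E) :=
  {p | IsHilbertian p ∧ HasSeparableQuotient p ∧ Continuous p}

lemma zero_mem_continuousHilbertianSeminorms : 0 ∈ continuousHilbertianSeminorms E :=
  ⟨⟨0, fun _ _ => rfl, fun _ => le_rfl, fun _ => by simp⟩,
    ⟨{0}, countable_singleton 0, fun _ ε hε => ⟨0, rfl, by simpa using hε⟩⟩,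
    continuous_const⟩

lemma directedOn_continuousHilbertianSeminorms :
    DirectedOn (· ≤ ·) (continuousHilbertianSeminorms E) :=
  fun _ ⟨hp, hsp, hcp⟩ _ ⟨hq, hsq, hcq⟩ =>
    ⟨_, ⟨hp.l2Sum hq, hsp.l2Sum hsq, continuous_l2Sum hcp hcq⟩,
      le_l2Sum_left, le_l2Sum_right⟩

end ContinuousHilbertian

-- A compact set of functionals is pointwise bounded, hence equicontinuous by barrelledness.
theorem exists_finset_bound_of_isCompact {𝕜 E F ι : Type*} [NontriviallyNormedField 𝕜]
    [AddCommGroup E] [Module 𝕜 E] [TopologicalSpace E] [ContinuousSMul 𝕜 E]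
    [BarrelledSpace 𝕜 E] [NormedAddCommGroup F] [NormedSpace 𝕜 F] [Nonempty ι]
    {p : SeminormFamily 𝕜 E ι} (hp : WithSeminorms p) {K : Set (E →L[𝕜] F)}
    (hK : IsCompact K) :
    ∃ s : Finset ι, ∃ C : ℝ≥0, ∀ f ∈ K, ∀ x, ‖f x‖ ≤ C * s.sup p x := by
  let pK : K → Seminorm 𝕜 E := fun f =>
    (normSeminorm 𝕜 F).comp (f : E →L[𝕜] F).toLinearMap
  have hbdd : BddAbove (range pK) := Seminorm.bddAbove_range_iff.mpr fun x =>
    (hK.image (continuous_eval_const x).norm).bddAbove.mono <| by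
      rintro _ ⟨f, rfl⟩
      exact mem_image_of_mem _ f.2
  have hcont : Continuous ⇑(⨆ f, pK f) := by
    rw [Seminorm.coe_iSup_eq hbdd]
    exact Seminorm.continuous_iSup pK
      (fun f => continuous_norm.comp (f : E →L[𝕜] F).continuous) hbdd
  obtain ⟨s, C, -, hC⟩ := Seminorm.bound_of_continuous hp _ hcont
  exact ⟨s, C, fun f hf x => (le_ciSup hbdd ⟨f, hf⟩ x).trans (hC x)⟩

lemma exists_continuousHilbertian_bound_of_isCompact {E ι : Type*} [AddCommGroup E]
    [Module ℝ E] [TopologicalSpace E] [ContinuousSMul ℝ E] [BarrelledSpace ℝ E] [Nonempty ι]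
    {p : SeminormFamily ℝ E ι} (hp : WithSeminorms p)
    (hpH : ∀ i, p i ∈ continuousHilbertianSeminorms E) {K : Set (E →L[ℝ] ℝ)}
    (hK : IsCompact K) :
    ∃ q ∈ continuousHilbertianSeminorms E, ∃ C : ℝ≥0, ∀ f ∈ K, ∀ x,
      |f x| ≤ C * q x := by
  classical
  obtain ⟨s, C, hC⟩ := exists_finset_bound_of_isCompact hp hK
  obtain ⟨q, hq, hsq⟩ := Finset.sup_le_of_le_directed _
    ⟨0, zero_mem_continuousHilbertianSeminorms E⟩ (directedOn_continuousHilbertianSeminorms E)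
    (s.image p) (by simpa using fun i _ => ⟨p i, hpH i, le_rfl⟩)
  refine ⟨q, hq, C, fun f hf x => (hC f hf x).trans ?_⟩
  rw [Finset.sup_image, Function.id_comp] at hsq
  exact mul_le_mul_of_nonneg_left (hsq x) C.coe_nonneg

lemma IsRadon.exists_isCompact_ae_mem {α : Type*} [TopologicalSpace α]
    {mα : MeasurableSpace α} {μ : Measure α} (hμ : IsRadon μ) :
    ∃ K : ℕ → Set α, (∀ n, IsCompact (K n)) ∧ ∀ᵐ x ∂μ, ∃ n, x ∈ K n := by
  choose K _ hK hμK using fun n : ℕ =>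
    hμ univ MeasurableSet.univ (n : ℝ≥0∞)⁻¹ (ENNReal.inv_pos.mpr (ENNReal.natCast_ne_top n))
  refine ⟨K, hK, ?_⟩
  rw [ae_iff]
  refine nonpos_iff_eq_zero.mp (ge_of_tendsto' ENNReal.tendsto_inv_nat_nhds_zero fun n => ?_)
  calc μ {x | ¬∃ n, x ∈ K n} ≤ μ (univ \ K n) :=
        measure_mono fun x hx => ⟨trivial, fun h => hx ⟨n, h⟩⟩
    _ ≤ (n : ℝ≥0∞)⁻¹ := (hμK n).le

theorem radon_distribution_implies_regular_general
    {Φ : Type*} [AddCommGroup Φ] [Module ℝ Φ] [TopologicalSpace Φ]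
    [ContinuousSMul ℝ Φ]
    {Ω : Type*} [MeasurableSpace Ω] (P : Measure Ω)
    (hΦ : IsMultiHilbertian Φ) (hbarrel : BarrelledSpace ℝ Φ)
    (X : Ω → (Φ →L[ℝ] ℝ))
    (hXmeas : BorelMeasurable X)
    (hradon : IsRadon (distributionOf P X)) :
    IsRegularRV P X := by
  obtain ⟨ι, hι, p, hp, hpH⟩ := hΦ
  borelize (Φ →L[ℝ] ℝ)
  obtain ⟨K, hK, hae⟩ := hradon.exists_isCompact_ae_mem
  have hXK : ∀ᵐ ω ∂P, ∃ n, X ω ∈ K n := ae_of_ae_map hXmeas.aemeasurable hae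
  have hbound n := exists_continuousHilbertian_bound_of_isCompact hp
    (fun i => ⟨(hpH i).1, (hpH i).2, hp.continuous_seminorm i⟩) (hK n)
  choose q hq C hC using hbound
  obtain ⟨r, hr_mono, hr, hqr⟩ :=
    DirectedOn.exists_monotone_ge (directedOn_continuousHilbertianSeminorms Φ) hq
  refine ⟨⟨r, hr_mono, fun n => (hr n).1, fun n => (hr n).2.1, fun n => (hr n).2.2⟩, ?_⟩
  filter_upwards [hXK] with ω ⟨n, hn⟩
  exact ⟨n, C n, fun φ =>
    (hC n _ hn φ).trans (mul_le_mul_of_nonneg_left (hqr n φ) (C n).coe_nonneg)⟩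

/-- If `Φ` is a multi-Hilbertian barrelled space and the distribution
`μ_X` of the `Φ'_β`-valued random variable `X` is a Radon probability measure, then `X`
is regular. -/
theorem radon_distribution_implies_regular
    {Φ : Type*} [AddCommGroup Φ] [Module ℝ Φ] [TopologicalSpace Φ]
    [IsTopologicalAddGroup Φ] [ContinuousSMul ℝ Φ]
    {Ω : Type*} [MeasurableSpace Ω] (P : Measure Ω) [IsProbabilityMeasure P] [P.IsComplete]
    (hΦ : IsMultiHilbertian Φ) (hbarrel : BarrelledSpace ℝ Φ)
    (X : Ω → (Φ →L[ℝ] ℝ))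
    (hXmeas : BorelMeasurable X)
    (hradon : IsRadon (distributionOf P X)) :
    IsRegularRV P X :=
  radon_distribution_implies_regular_general P hΦ hbarrel X hXmeas hradon

end Paper
end
end

section
/- Let Φ be a multi-Hilbertian space and let X, Y be Φ'_β-valued regular random variables. Then X = Y P-a.e. if and only if for every φ ∈ Φ, X[φ] = Y[φ] P-a.e. -/
open MeasureTheory Topology Filter Set
open scoped ENNReal NNReal

noncomputable section

namespace Paper

universe u

variable {Φ : Type*} [AddCommGroup Φ] [Module ℝ Φ]

/-!
Almost surely `X` is bounded by some `pₙ` of its countably Hilbertian topology and `Y` by some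
`qₘ` of its own, so `X - Y` is bounded by `pₙ ⊔ qₘ`. Each of these countably many seminorms has
a countable dense set; almost surely `X` and `Y` agree on all of them, and a bounded functional
vanishing on a dense set is zero.
-/

lemma HasSeparableQuotient.sup {p q : Seminorm ℝ Φ} (hp : HasSeparableQuotient p)
    (hq : HasSeparableQuotient q) : HasSeparableQuotient (p ⊔ q) := by
  obtain ⟨Dp, hDp_countable, hDp⟩ := hp
  obtain ⟨Dq, hDq_countable, hDq⟩ := hq
  let near (a b : Φ) (k : ℕ) : Set Φ := {φ | p (a - φ) < 1 / (k + 1) ∧ q (b - φ) < 1 / (k + 1)}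
  let pick (a b : Φ) (k : ℕ) : Φ := Classical.epsilon (· ∈ near a b k)
  have triangle (r : Seminorm ℝ Φ) (x a y : Φ) : r (x - y) ≤ r (x - a) + r (a - y) := by
    simpa only [sub_add_sub_cancel] using map_add_le_add r (x - a) (a - y)
  refine ⟨⋃ a ∈ Dp, ⋃ b ∈ Dq, range (pick a b),
    hDp_countable.biUnion fun a _ => hDq_countable.biUnion fun b _ => countable_range _, ?_⟩
  intro x ε hε
  obtain ⟨k, hk⟩ := exists_nat_one_div_lt (half_pos hε)
  have hk_pos : (0 : ℝ) < 1 / (k + 1) := Nat.one_div_pos_of_nat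
  obtain ⟨a, ha, hxa⟩ := hDp x _ hk_pos
  obtain ⟨b, hb, hxb⟩ := hDq x _ hk_pos
  have hx : x ∈ near a b k := ⟨by rwa [map_sub_rev], by rwa [map_sub_rev]⟩
  have hpick : pick a b k ∈ near a b k := Classical.epsilon_spec ⟨x, hx⟩
  refine ⟨pick a b k, mem_iUnion₂.2 ⟨a, ha, mem_iUnion₂.2 ⟨b, hb, mem_range_self k⟩⟩, ?_⟩
  rw [Seminorm.sup_apply, max_lt_iff]
  constructor
  · linarith [triangle p x a (pick a b k), hpick.1]
  · linarith [triangle q x b (pick a b k), hpick.2]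

lemma MemDualOf.mono {p q : Seminorm ℝ Φ} {f : Φ →ₗ[ℝ] ℝ} (hpq : p ≤ q) (hf : MemDualOf p f) :
    MemDualOf q f := by
  obtain ⟨C, hC⟩ := hf
  refine ⟨|C|, fun φ => ?_⟩
  calc |f φ| ≤ C * p φ := hC φ
    _ ≤ |C| * p φ := mul_le_mul_of_nonneg_right (le_abs_self C) (apply_nonneg p φ)
    _ ≤ |C| * q φ := mul_le_mul_of_nonneg_left (hpq φ) (abs_nonneg C)

lemma MemDualOf.sub {q : Seminorm ℝ Φ} {f g : Φ →ₗ[ℝ] ℝ} (hf : MemDualOf q f)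
    (hg : MemDualOf q g) : MemDualOf q (f - g) := by
  obtain ⟨C₁, hC₁⟩ := hf
  obtain ⟨C₂, hC₂⟩ := hg
  refine ⟨C₁ + C₂, fun φ => ?_⟩
  calc |(f - g) φ| ≤ |f φ| + |g φ| := abs_sub (f φ) (g φ)
    _ ≤ (C₁ + C₂) * q φ := by linarith [hC₁ φ, hC₂ φ]

lemma MemDualOf.eq_zero_of_forall_dense_eq_zero {p : Seminorm ℝ Φ} {f : Φ →ₗ[ℝ] ℝ} {D : Set Φ}
    (hf : MemDualOf p f) (hD : ∀ x : Φ, ∀ ε : ℝ, 0 < ε → ∃ y ∈ D, p (x - y) < ε)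
    (hfD : ∀ y ∈ D, f y = 0) : f = 0 := by
  obtain ⟨C, hC⟩ := hf
  ext x
  rw [LinearMap.zero_apply]
  refine abs_nonpos_iff.1 (le_of_forall_pos_lt_add fun ε hε => ?_)
  have hδ : 0 < ε / (|C| + 1) := by positivity
  obtain ⟨y, hy, hxy⟩ := hD x _ hδ
  calc |f x| = |f (x - y)| := by rw [map_sub, hfD y hy, sub_zero]
    _ ≤ C * p (x - y) := hC _
    _ ≤ |C| * p (x - y) := mul_le_mul_of_nonneg_right (le_abs_self C) (apply_nonneg p _)
    _ ≤ |C| * (ε / (|C| + 1)) := mul_le_mul_of_nonneg_left hxy.le (abs_nonneg C)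
    _ < (|C| + 1) * (ε / (|C| + 1)) := by gcongr; linarith
    _ = 0 + ε := by field_simp; ring

theorem regular_ae_eq_iff_cylindrical_ae_eq_general
    {Φ : Type*} [AddCommGroup Φ] [Module ℝ Φ] [TopologicalSpace Φ]
    {Ω : Type*} [MeasurableSpace Ω] (P : Measure Ω)
    (X Y : Ω → (Φ →L[ℝ] ℝ))
    (hXreg : IsRegularRV P X) (hYreg : IsRegularRV P Y) :
    (∀ᵐ ω ∂P, X ω = Y ω) ↔ ∀ φ : Φ, ∀ᵐ ω ∂P, X ω φ = Y ω φ := by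
  refine ⟨fun h φ => h.mono fun ω hω => by rw [hω], fun h => ?_⟩
  obtain ⟨θX, hθX⟩ := hXreg
  obtain ⟨θY, hθY⟩ := hYreg
  choose D hD_countable hD using fun nm : ℕ × ℕ => (θX.sep nm.1).sup (θY.sep nm.2)
  have hXY_on_D : ∀ᵐ ω ∂P, ∀ nm, ∀ φ ∈ D nm, X ω φ = Y ω φ :=
    ae_all_iff.2 fun nm => (ae_ball_iff (hD_countable nm)).2 fun φ _ => h φ
  filter_upwards [hXY_on_D, hθX, hθY] with ω hω ⟨n, hXn⟩ ⟨m, hYm⟩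
  have hXn : MemDualOf (θX.p n) (X ω : Φ →ₗ[ℝ] ℝ) := hXn
  have hYm : MemDualOf (θY.p m) (Y ω : Φ →ₗ[ℝ] ℝ) := hYm
  have hsub : MemDualOf (θX.p n ⊔ θY.p m) ((X ω : Φ →ₗ[ℝ] ℝ) - Y ω) :=
    (hXn.mono le_sup_left).sub (hYm.mono le_sup_right)
  have hzero := hsub.eq_zero_of_forall_dense_eq_zero (hD (n, m)) fun φ hφ =>
    sub_eq_zero.2 (hω (n, m) φ hφ)
  ext φ
  exact sub_eq_zero.1 (LinearMap.congr_fun hzero φ)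

/-- If `Φ` is multi-Hilbertian and `X`, `Y` are regular `Φ'_β`-valued
random variables, then `X = Y` `P`-a.e. iff `X[φ] = Y[φ]` `P`-a.e. for every `φ ∈ Φ`. -/
theorem regular_ae_eq_iff_cylindrical_ae_eq
    {Φ : Type*} [AddCommGroup Φ] [Module ℝ Φ] [TopologicalSpace Φ]
    [IsTopologicalAddGroup Φ] [ContinuousSMul ℝ Φ]
    {Ω : Type*} [MeasurableSpace Ω] (P : Measure Ω) [IsProbabilityMeasure P] [P.IsComplete]
    (hΦ : IsMultiHilbertian Φ)
    (X Y : Ω → (Φ →L[ℝ] ℝ))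
    (hXmeas : BorelMeasurable X) (hYmeas : BorelMeasurable Y)
    (hXreg : IsRegularRV P X) (hYreg : IsRegularRV P Y) :
    (∀ᵐ ω ∂P, X ω = Y ω) ↔ ∀ φ : Φ, ∀ᵐ ω ∂P, X ω φ = Y ω φ :=
  regular_ae_eq_iff_cylindrical_ae_eq_general P X Y hXreg hYreg

end Paper
end
end

section
/- Let Φ be a nuclear space, T > 0, D a countable dense subset of [0,T], and let X̂ be a linear map from Φ into the continuous real-valued processes on [0,T] that is continuous as a map from Φ into C_T(ℝ). Then for every ε > 0 there exists a continuous Hilbertian semi-norm p on Φ such that E( sup_{t∈D} |1 − e^{i X̂_t(φ)}| ) ≤ ε + 2 p(φ)² for all φ ∈ Φ. -/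
open MeasureTheory Topology Filter Set
open scoped ENNReal NNReal

noncomputable section

namespace Paper

universe u

variable {Φ : Type*} [AddCommGroup Φ] [Module ℝ Φ]

/-!
Continuity of `X̂` at `0` gives a neighbourhood `U` of `0` on which
`P(sup_{t ≤ T} |X̂_t(φ)| ≥ ε/3) < ε/3`. Since the topology of `Φ` is generated by Hilbertian
seminorms, `U` contains the unit ball of one continuous Hilbertian seminorm `p` (a rescaled
`ℓ²`-sum of finitely many of them). As `|1 - e^{ix}| ≤ min(|x|, 2)`, the expectation is at most
`ε/3 + 2 P(sup_{t ∈ D} |X̂_t(φ)| ≥ ε/3)`, which is `≤ ε` when `p(φ) < 1` and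
`≤ ε/3 + 2 ≤ ε + 2 p(φ)²` otherwise.
-/

lemma norm_one_sub_exp_ofReal_mul_I_le_abs (x : ℝ) :
    ‖1 - Complex.exp (x * Complex.I)‖ ≤ |x| := by
  rw [norm_sub_rev, mul_comm]
  exact Real.norm_exp_I_mul_ofReal_sub_one_le

lemma norm_one_sub_exp_ofReal_mul_I_le_two (x : ℝ) :
    ‖1 - Complex.exp (x * Complex.I)‖ ≤ 2 := by
  calc ‖1 - Complex.exp (x * Complex.I)‖
      ≤ ‖(1 : ℂ)‖ + ‖Complex.exp (x * Complex.I)‖ := norm_sub_le _ _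
    _ = 2 := by rw [Complex.norm_exp_ofReal_mul_I]; norm_num

def bilinSeminorm (B : LinearMap.BilinForm ℝ Φ) (hsymm : ∀ x y, B x y = B y x)
    (hpos : ∀ x, 0 ≤ B x x) : Seminorm ℝ Φ :=
  Seminorm.of (fun x => √(B x x))
    (fun x y => by
      have hcs : B x y ≤ √(B x x) * √(B y y) := by
        rw [← Real.sqrt_mul (hpos x)]
        exact Real.le_sqrt_of_sq_le (B.apply_sq_le_of_symm hpos ⟨hsymm⟩ x y)
      have hexpand : B (x + y) (x + y) = B x x + 2 * B x y + B y y := by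
        simp only [map_add, LinearMap.add_apply, hsymm y x]
        ring
      rw [Real.sqrt_le_left (by positivity), hexpand, add_sq, Real.sq_sqrt (hpos x),
        Real.sq_sqrt (hpos y)]
      linarith)
    (fun a x => by
      simp only [map_smul, LinearMap.smul_apply, smul_eq_mul, ← mul_assoc]
      rw [Real.sqrt_mul (mul_self_nonneg a), Real.sqrt_mul_self_eq_abs, Real.norm_eq_abs])

lemma isHilbertian_bilinSeminorm (B : LinearMap.BilinForm ℝ Φ) (hsymm : ∀ x y, B x y = B y x)
    (hpos : ∀ x, 0 ≤ B x x) : IsHilbertian (bilinSeminorm B hsymm hpos) :=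
  ⟨B, hsymm, hpos, fun x => Real.sq_sqrt (hpos x)⟩

lemma exists_isHilbertian_eq_sqrt_smul_sum_sq {ι : Type*} {q : ι → Seminorm ℝ Φ}
    (hq : ∀ i, IsHilbertian (q i)) (s : Finset ι) {c : ℝ} (hc : 0 ≤ c) :
    ∃ p : Seminorm ℝ Φ, IsHilbertian p ∧ ∀ x, p x = √(c * ∑ i ∈ s, q i x ^ 2) := by
  choose Q hsymm hpos hsq using hq
  have hB : ∀ x y, (c • ∑ i ∈ s, Q i) x y = c * ∑ i ∈ s, Q i x y := by
    intro x y
    simp only [LinearMap.smul_apply, LinearMap.sum_apply, smul_eq_mul]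
  refine ⟨bilinSeminorm (c • ∑ i ∈ s, Q i) (fun x y => ?_) (fun x => ?_),
    isHilbertian_bilinSeminorm .., fun x => ?_⟩
  · simp only [hB, hsymm]
  · rw [hB]
    exact mul_nonneg hc (Finset.sum_nonneg fun i _ => hpos i x)
  · show √(_) = _
    simp only [hB, hsq]

lemma WithSeminorms.exists_isHilbertian_ball_subset [TopologicalSpace Φ] {ι : Type*}
    {q : SeminormFamily ℝ Φ ι} (hq : WithSeminorms q) (hqH : ∀ i, IsHilbertian (q i))
    {U : Set Φ} (hU : U ∈ 𝓝 0) :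
    ∃ p : Seminorm ℝ Φ, IsHilbertian p ∧ Continuous p ∧ p.ball 0 1 ⊆ U := by
  obtain ⟨s, r, hr, hball⟩ := (hq.mem_nhds_iff 0 U).mp hU
  obtain ⟨p, hpH, hp⟩ :=
    exists_isHilbertian_eq_sqrt_smul_sum_sq hqH s (inv_nonneg.mpr (sq_nonneg r))
  refine ⟨p, hpH, ?_, fun x hx => hball ?_⟩
  · simp_rw [funext hp]
    have := hq.continuous_seminorm
    fun_prop
  · rw [Seminorm.mem_ball_zero, hp, Real.sqrt_lt' one_pos, one_pow,
      inv_mul_lt_one₀ (by positivity)] at hx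
    rw [Seminorm.mem_ball_zero]
    refine Seminorm.finset_sup_apply_lt hr fun i hi => ?_
    refine lt_of_pow_lt_pow_left₀ 2 hr.le ((Finset.single_le_sum ?_ hi).trans_lt hx)
    exact fun j _ => sq_nonneg (q j x)

lemma IsNuclearSpace.exists_isHilbertian_ball_subset [TopologicalSpace Φ]
    (hΦ : IsNuclearSpace Φ) {U : Set Φ} (hU : U ∈ 𝓝 0) :
    ∃ p : Seminorm ℝ Φ, IsHilbertian p ∧ Continuous p ∧ p.ball 0 1 ⊆ U := by
  obtain ⟨ι, _, q, hq, hqH, -⟩ := hΦ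
  exact WithSeminorms.exists_isHilbertian_ball_subset hq hqH hU

section CharacteristicFunction

variable {Ω ι : Type*} {D : Set ι} {Y : ι → Ω → ℝ} {δ : ℝ}

lemma iSup_norm_one_sub_exp_le_add_indicator (hδ : 0 ≤ δ) (ω : Ω) :
    ⨆ t ∈ D, ‖1 - Complex.exp (Y t ω * Complex.I)‖ ≤
      δ + {ω | ∃ t ∈ D, δ ≤ |Y t ω|}.indicator (fun _ => 2) ω := by
  classical
  rw [Set.indicator_apply]
  split_ifs with hω
  · refine Real.iSup_le (fun t => Real.iSup_le (fun _ => ?_) (by positivity)) (by positivity)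
    linarith [norm_one_sub_exp_ofReal_mul_I_le_two (Y t ω)]
  · simp only [Set.mem_ofPred_eq, not_exists, not_and, not_le] at hω
    rw [add_zero]
    exact Real.iSup_le (fun t => Real.iSup_le (fun ht =>
      (norm_one_sub_exp_ofReal_mul_I_le_abs _).trans (hω t ht).le) hδ) hδ

lemma integral_iSup_norm_one_sub_exp_le [MeasurableSpace Ω] (P : Measure Ω)
    [IsProbabilityMeasure P] (hD : D.Countable) (hY : ∀ t ∈ D, Measurable (Y t)) (hδ : 0 ≤ δ) :
    ∫ ω, ⨆ t ∈ D, ‖1 - Complex.exp (Y t ω * Complex.I)‖ ∂P ≤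
      δ + 2 * P.real {ω | ∃ t ∈ D, δ ≤ |Y t ω|} := by
  set A := {ω | ∃ t ∈ D, δ ≤ |Y t ω|}
  have hA : MeasurableSet A := by
    rw [show A = ⋃ t ∈ D, {ω | δ ≤ |Y t ω|} by ext; simp [A]]
    exact MeasurableSet.biUnion hD fun t ht => measurableSet_le measurable_const (hY t ht).abs
  have hind : Integrable (A.indicator fun _ => (2 : ℝ)) P := (integrable_const _).indicator hA
  calc ∫ ω, ⨆ t ∈ D, ‖1 - Complex.exp (Y t ω * Complex.I)‖ ∂P
      ≤ ∫ ω, δ + A.indicator (fun _ => 2) ω ∂P :=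
        integral_mono_of_nonneg (ae_of_all _ fun ω => Real.iSup_nonneg fun t =>
          Real.iSup_nonneg fun _ => norm_nonneg _) ((integrable_const δ).add hind)
          (ae_of_all _ (iSup_norm_one_sub_exp_le_add_indicator hδ))
    _ = δ + 2 * P.real A := by
        rw [integral_add (integrable_const δ) hind, integral_const, integral_indicator_const _ hA]
        simp [mul_comm]

end CharacteristicFunction

theorem characteristic_function_bound_general
    {Φ : Type*} [AddCommGroup Φ] [Module ℝ Φ] [TopologicalSpace Φ]
    {Ω : Type*} [MeasurableSpace Ω] (P : Measure Ω) [IsProbabilityMeasure P]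
    (hΦ : IsNuclearSpace Φ) (T : ℝ)
    (D : Set ℝ) (hDcount : D.Countable) (hDsub : D ⊆ Set.Icc 0 T)
    (Xh : ℝ → Φ → Ω → ℝ)
    (hXhmeas : ∀ t ∈ Set.Icc (0 : ℝ) T, ∀ φ : Φ, Measurable (Xh t φ))
    (hXhlin : ∀ t ∈ Set.Icc (0 : ℝ) T, ∀ (a b : ℝ) (φ ψ : Φ), ∀ᵐ ω ∂P,
      Xh t (a • φ + b • ψ) ω = a * Xh t φ ω + b * Xh t ψ ω)
    (hXhcont : ∀ φ₀ : Φ, ∀ ε : ℝ, 0 < ε → ∃ U ∈ 𝓝 φ₀, ∀ φ ∈ U,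
      P {ω | ∃ t ∈ Set.Icc (0 : ℝ) T, ε ≤ |Xh t φ ω - Xh t φ₀ ω|} < ENNReal.ofReal ε)
    (ε : ℝ) (hε : 0 < ε) :
    ∃ p : Seminorm ℝ Φ, IsHilbertian p ∧ Continuous ⇑p ∧
      ∀ φ : Φ,
        (∫ ω, (⨆ t ∈ D, ‖1 - Complex.exp ((Xh t φ ω : ℂ) * Complex.I)‖) ∂P)
          ≤ ε + 2 * (p φ) ^ 2 := by
  obtain ⟨U, hU, hUP⟩ := hXhcont 0 (ε / 3) (by positivity)
  obtain ⟨p, hpH, hpc, hpU⟩ := hΦ.exists_isHilbertian_ball_subset hU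
  have hzero : ∀ᵐ ω ∂P, ∀ t ∈ D, Xh t 0 ω = 0 := by
    refine (ae_ball_iff hDcount).mpr fun t ht => ?_
    filter_upwards [hXhlin t (hDsub ht) 0 0 0 0] with ω hω
    simpa using hω
  refine ⟨p, hpH, hpc, fun φ => (integral_iSup_norm_one_sub_exp_le P hDcount
    (fun t ht => hXhmeas t (hDsub ht) φ) (by positivity : 0 ≤ ε / 3)).trans ?_⟩
  rcases lt_or_ge (p φ) 1 with hφ | hφ
  · have hsmall : P {ω | ∃ t ∈ D, ε / 3 ≤ |Xh t φ ω|} ≤ ENNReal.ofReal (ε / 3) := by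
      refine (measure_mono_ae ?_).trans (hUP φ (hpU (by simpa using hφ))).le
      filter_upwards [hzero] with ω hω ⟨t, ht, hle⟩
      exact ⟨t, hDsub ht, by rwa [hω t ht, sub_zero]⟩
    have hsmall_real := ENNReal.toReal_le_of_le_ofReal (by positivity) hsmall
    rw [← measureReal_def] at hsmall_real
    nlinarith [sq_nonneg (p φ)]
  · nlinarith [measureReal_le_one (μ := P) (s := {ω | ∃ t ∈ D, ε / 3 ≤ |Xh t φ ω|})]

/-- Let `Φ` be nuclear, `T > 0`, `D ⊆ [0,T]` countable dense, and `X̂`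
a linear map from `Φ` into the continuous real processes on `[0,T]` which is continuous
into `C_T(ℝ)`. Then for every `ε > 0` there is a continuous Hilbertian seminorm `p` on
`Φ` with `E(sup_{t∈D} |1 - e^{i X̂_t(φ)}|) ≤ ε + 2 p(φ)²` for all `φ ∈ Φ`. -/
theorem characteristic_function_bound
    {Φ : Type*} [AddCommGroup Φ] [Module ℝ Φ] [TopologicalSpace Φ]
    [IsTopologicalAddGroup Φ] [ContinuousSMul ℝ Φ]
    {Ω : Type*} [MeasurableSpace Ω] (P : Measure Ω) [IsProbabilityMeasure P] [P.IsComplete]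
    (hΦ : IsNuclearSpace Φ) (T : ℝ) (hT : 0 < T)
    (D : Set ℝ) (hDcount : D.Countable) (hDsub : D ⊆ Set.Icc 0 T)
    (hDdense : Set.Icc (0 : ℝ) T ⊆ closure D)
    (Xh : ℝ → Φ → Ω → ℝ)
    (hXhmeas : ∀ t ∈ Set.Icc (0 : ℝ) T, ∀ φ : Φ, Measurable (Xh t φ))
    (hXhlin : ∀ t ∈ Set.Icc (0 : ℝ) T, ∀ (a b : ℝ) (φ ψ : Φ), ∀ᵐ ω ∂P,
      Xh t (a • φ + b • ψ) ω = a * Xh t φ ω + b * Xh t ψ ω)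
    (hXhpaths : ∀ φ : Φ, ∀ᵐ ω ∂P, ContinuousOn (fun t => Xh t φ ω) (Set.Icc 0 T))
    (hXhcont : ∀ φ₀ : Φ, ∀ ε : ℝ, 0 < ε → ∃ U ∈ 𝓝 φ₀, ∀ φ ∈ U,
      P {ω | ∃ t ∈ Set.Icc (0 : ℝ) T, ε ≤ |Xh t φ ω - Xh t φ₀ ω|} < ENNReal.ofReal ε)
    (ε : ℝ) (hε : 0 < ε) :
    ∃ p : Seminorm ℝ Φ, IsHilbertian p ∧ Continuous ⇑p ∧
      ∀ φ : Φ,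
        (∫ ω, (⨆ t ∈ D, ‖1 - Complex.exp ((Xh t φ ω : ℂ) * Complex.I)‖) ∂P)
          ≤ ε + 2 * (p φ) ^ 2 :=
  characteristic_function_bound_general P hΦ T D hDcount hDsub Xh hXhmeas hXhlin hXhcont ε hε

end Paper
end
end
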